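/- Fix d ∈ ℕ and suppose for each N > d the discrete orthonormal polynomials {φ_k^{(N)}}_{k=0}^d on the points x_1^{(N)},…,x_N^{(N)} ⊂ [a,b] satisfy ‖φ_k^{(N)}‖_∞² ≤ C(d)/N for all k = 0,…,d and all N ≥ N(d), for some constants C(d) > 0 and N(d) > d. Then the least-squares quadrature weights ω_n^{LS,(N)} = ∑_{k=0}^d φ_k^{(N)}(x_n^{(N)}) I[φ_k^{(N)}] satisfy sup_{N>d} ∑_{n=1}^N |ω_n^{LS,(N)}| < ∞; in particular ∑_{n=1}^N |ω_n^{LS,(N)}| ≤ K_ω (d+1) C(d) for N ≥ N(d). -/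

import Mathlib

/-!
Since `2|u||v| ≤ u² + v²`, the sup bound `φ_k² ≤ C/N` gives `|φ_k(x_n) φ_k(t)| ≤ C/N` on
`[a,b]`, so `|w_n| ≤ (d+1) (C/N) K_ω`, and summing over the `N` nodes cancels the factor `1/N`.
Finitely many `N < N(d)` do not affect boundedness.
-/

open MeasureTheory Finset

lemma abs_mul_abs_le_of_sq_le {u v B : ℝ} (hu : u ^ 2 ≤ B) (hv : v ^ 2 ≤ B) :
    |u| * |v| ≤ B := by
  nlinarith [sq_abs u, sq_abs v, sq_nonneg (|u| - |v|)]

lemma abs_mul_intervalIntegral_mul_le {a b : ℝ} (hab : a ≤ b) {ω p : ℝ → ℝ}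
    (hω : IntervalIntegrable ω volume a b) (hp : ContinuousOn p (Set.uIcc a b)) {u B : ℝ}
    (hu : u ^ 2 ≤ B) (hpB : ∀ t ∈ Set.Icc a b, p t ^ 2 ≤ B) :
    |u * ∫ t in a..b, p t * ω t| ≤ B * ∫ t in a..b, |ω t| :=
  calc |u * ∫ t in a..b, p t * ω t|
      = |∫ t in a..b, u * (p t * ω t)| := by rw [intervalIntegral.integral_const_mul]
    _ ≤ ∫ t in a..b, |u * (p t * ω t)| := intervalIntegral.abs_integral_le_integral_abs hab
    _ ≤ ∫ t in a..b, B * |ω t| := by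
      refine intervalIntegral.integral_mono_on hab ((hω.continuousOn_mul hp).const_mul u).abs
        (hω.abs.const_mul B) fun t ht => ?_
      rw [abs_mul, abs_mul, ← mul_assoc]
      exact mul_le_mul_of_nonneg_right (abs_mul_abs_le_of_sq_le hu (hpB t ht)) (abs_nonneg _)
    _ = B * ∫ t in a..b, |ω t| := intervalIntegral.integral_const_mul B _

lemma abs_sum_mul_intervalIntegral_mul_le {ι : Type*} [Fintype ι] {a b : ℝ} (hab : a ≤ b)
    {ω : ℝ → ℝ} (hω : IntervalIntegrable ω volume a b) {p : ι → ℝ → ℝ}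
    (hp : ∀ k, ContinuousOn (p k) (Set.uIcc a b)) {B : ℝ}
    (hpB : ∀ k, ∀ t ∈ Set.Icc a b, p k t ^ 2 ≤ B) {s : ℝ} (hs : s ∈ Set.Icc a b) :
    |∑ k, p k s * ∫ t in a..b, p k t * ω t| ≤ Fintype.card ι * (B * ∫ t in a..b, |ω t|) :=
  calc |∑ k, p k s * ∫ t in a..b, p k t * ω t|
      ≤ ∑ k, |p k s * ∫ t in a..b, p k t * ω t| := abs_sum_le_sum_abs _ _
    _ ≤ ∑ _k : ι, B * ∫ t in a..b, |ω t| := sum_le_sum fun k _ =>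
      abs_mul_intervalIntegral_mul_le hab hω (hp k) (hpB k s hs) (hpB k)
    _ = Fintype.card ι * (B * ∫ t in a..b, |ω t|) := by
      rw [sum_const, card_univ, nsmul_eq_mul]

lemma natCast_mul_div_natCast_le {C : ℝ} (hC : 0 ≤ C) (N : ℕ) : (N : ℝ) * (C / N) ≤ C := by
  rcases N.eq_zero_or_pos with rfl | hN
  · simpa using hC
  · rw [mul_div_cancel₀ C (by positivity)]

theorem stmt13_general (a b : ℝ) (hab : a < b) (ω : ℝ → ℝ)
    (hω : IntervalIntegrable ω volume a b) (d : ℕ)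
    (x : (N : ℕ) → Fin N → ℝ) (hx : ∀ N n, x N n ∈ Set.Icc a b)
    (φ : (N : ℕ) → Fin (d + 1) → Polynomial ℝ)
    (C : ℝ) (hC : 0 < C) (N₀ : ℕ)
    (hbound : ∀ N, N₀ ≤ N → ∀ k, ∀ t ∈ Set.Icc a b, |(φ N k).eval t| ^ 2 ≤ C / N)
    (w : (N : ℕ) → Fin N → ℝ)
    (hw : ∀ N n, w N n =
      ∑ k, (φ N k).eval (x N n) * ∫ t in a..b, (φ N k).eval t * ω t) :
    (∀ N, N₀ ≤ N → ∑ n, |w N n| ≤ (∫ t in a..b, |ω t|) * (d + 1) * C) ∧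
      ∃ M : ℝ, ∀ N, d < N → ∑ n, |w N n| ≤ M := by
  set K := ∫ t in a..b, |ω t|
  have hK : 0 ≤ K := intervalIntegral.integral_nonneg hab.le fun t _ => abs_nonneg _
  have hweight : ∀ N, N₀ ≤ N → ∀ n, |w N n| ≤ (d + 1) * (C / N * K) := fun N hN n => by
    simpa [hw] using abs_sum_mul_intervalIntegral_mul_le hab.le hω
      (fun k => (φ N k).continuous.continuousOn) (fun k t ht => by rw [← sq_abs]; exact hbound N hN k t ht)
      (hx N n)
  have hsum : ∀ N, N₀ ≤ N → ∑ n, |w N n| ≤ K * (d + 1) * C := fun N hN =>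
    calc ∑ n, |w N n| ≤ ∑ _n : Fin N, ((d : ℝ) + 1) * (C / N * K) :=
          sum_le_sum fun n _ => hweight N hN n
      _ = ((N : ℝ) * (C / N)) * (K * (d + 1)) := by
        simp only [sum_const, card_univ, Fintype.card_fin, nsmul_eq_mul]; ring
      _ ≤ C * (K * (d + 1)) :=
        mul_le_mul_of_nonneg_right (natCast_mul_div_natCast_le hC.le N) (by positivity)
      _ = K * (d + 1) * C := by ring
  obtain ⟨M, hM⟩ := (Filter.isBoundedUnder_of_eventually_le
    (Filter.eventually_atTop.2 ⟨N₀, hsum⟩)).bddAbove_range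
  exact ⟨hsum, M, fun N _ => hM ⟨N, rfl⟩⟩

theorem stmt13 (a b : ℝ) (hab : a < b) (ω : ℝ → ℝ)
    (hω : IntervalIntegrable ω volume a b) (d : ℕ)
    (x : (N : ℕ) → Fin N → ℝ) (hx : ∀ N n, x N n ∈ Set.Icc a b)
    (hinj : ∀ N, d < N → Function.Injective (x N))
    (φ : (N : ℕ) → Fin (d + 1) → Polynomial ℝ)
    (hdeg : ∀ N k, ((φ N k).degree : WithBot ℕ) ≤ (d : WithBot ℕ))
    (horth : ∀ N, d < N → ∀ k l,
      ∑ n, (φ N k).eval (x N n) * (φ N l).eval (x N n) = if k = l then 1 else 0)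
    (C : ℝ) (hC : 0 < C) (N₀ : ℕ) (hN₀ : d < N₀)
    (hbound : ∀ N, N₀ ≤ N → ∀ k, ∀ t ∈ Set.Icc a b, |(φ N k).eval t| ^ 2 ≤ C / N)
    (w : (N : ℕ) → Fin N → ℝ)
    (hw : ∀ N n, w N n =
      ∑ k, (φ N k).eval (x N n) * ∫ t in a..b, (φ N k).eval t * ω t) :
    (∀ N, N₀ ≤ N → ∑ n, |w N n| ≤ (∫ t in a..b, |ω t|) * (d + 1) * C) ∧
      ∃ M : ℝ, ∀ N, d < N → ∑ n, |w N n| ≤ M :=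
  stmt13_general a b hab ω hω d x hx φ C hC N₀ hbound w hw
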